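/- arXiv:0905.2007 — 4 statements merged into one kernel-verified Lean document; each statement's English description precedes it below -/
import Mathlib

section
/- There is a constant C such that every integer-valued random variable N with finite variance satisfies H(N) ≤ C + max(0, log Var(N)), where H(N) is the Shannon entropy of the distribution of N. -/
open Real

/-- Shannon entropy of a measure on a countable set. -/
noncomputable def entropy {X : Type*} (μ : X → ℝ) : ℝ := ∑' x, negMulLog (μ x)

/-!
By Gibbs' inequality, `H(p) ≤ ∑ q - 1 - ∑ p log q` for every positive summable weight `q`.
Take the discrete Laplace weight `q n = s⁻¹ exp (-|n - m| / s)` with centre `m = ⌊E N⌋` and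
scale `s = max 1 (Var N)`: its mass is at most `2 + s⁻¹`, and `-E log q = log s + E |N - m| / s`
with `E |N - m| ≤ 3 / 2 + Var N / 2`. Hence `H(N) ≤ 4 + log (max 1 (Var N))`.
-/

lemma negMulLog_le_sub_sub_mul_log {x y : ℝ} (hx : 0 ≤ x) (hy : 0 < y) :
    negMulLog x ≤ y - x - x * log y := by
  have hsplit : negMulLog x = y * negMulLog (x / y) - x * log y := by
    conv_lhs => rw [← mul_div_cancel₀ x hy.ne', negMulLog_mul]
    rw [negMulLog]
    field_simp
    ring
  have hgibbs : y * negMulLog (x / y) ≤ y * (1 - x / y) :=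
    mul_le_mul_of_nonneg_left (negMulLog_le_one_sub_self (div_nonneg hx hy.le)) hy.le
  rw [mul_one_sub, mul_div_cancel₀ x hy.ne'] at hgibbs
  linarith

theorem entropy_le_of_hasSum {X : Type*} {p q : X → ℝ} {s c : ℝ} (hp0 : ∀ x, 0 ≤ p x)
    (hp : HasSum p 1) (hq0 : ∀ x, 0 < q x) (hq : HasSum q s)
    (hc : HasSum (fun x => -(p x * log (q x))) c) :
    entropy p ≤ s - 1 + c := by
  have hg : HasSum (fun x => q x - p x - p x * log (q x)) (s - 1 + c) := by
    simpa only [sub_eq_add_neg, add_assoc] using (hq.sub hp).add hc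
  have hle : ∀ x, negMulLog (p x) ≤ q x - p x - p x * log (q x) := fun x =>
    negMulLog_le_sub_sub_mul_log (hp0 x) (hq0 x)
  have hnonneg : ∀ x, 0 ≤ negMulLog (p x) := fun x =>
    negMulLog_nonneg (hp0 x) (le_hasSum hp x fun y _ => hp0 y)
  exact hasSum_le hle (Summable.of_nonneg_of_le hnonneg hle hg.summable).hasSum hg

lemma hasSum_pow_natAbs_sub {r : ℝ} (hr0 : 0 ≤ r) (hr1 : r < 1) (m : ℤ) :
    HasSum (fun n : ℤ => r ^ (n - m).natAbs) ((1 + r) / (1 - r)) := by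
  have hgeo := hasSum_geometric_of_lt_one hr0 hr1
  have h0 : HasSum (fun n : ℤ => r ^ n.natAbs)
      ((1 - r)⁻¹ + (1 - r)⁻¹ - r ^ (0 : ℤ).natAbs) :=
    HasSum.of_nat_of_neg (f := fun n : ℤ => r ^ n.natAbs)
      (by simpa only [Int.natAbs_natCast] using hgeo)
      (by simpa only [Int.natAbs_neg, Int.natAbs_natCast] using hgeo)
  have hval : (1 - r)⁻¹ + (1 - r)⁻¹ - r ^ (0 : ℤ).natAbs = (1 + r) / (1 - r) := by
    rw [Int.natAbs_zero, pow_zero]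
    field_simp [(sub_pos.2 hr1).ne']
    ring
  rw [← hval]
  exact ((Equiv.subRight m).hasSum_iff (f := fun n : ℤ => r ^ n.natAbs)).2 h0

lemma one_add_exp_neg_div_one_sub_exp_neg_le {a : ℝ} (ha : 0 < a) :
    (1 + exp (-a)) / (1 - exp (-a)) ≤ 1 + 2 / a := by
  have hexp : a + 1 ≤ exp a := add_one_le_exp a
  have hpos : 0 < exp a - 1 := by linarith
  have hrw : (1 + exp (-a)) / (1 - exp (-a)) = 1 + 2 / (exp a - 1) := by
    rw [exp_neg]
    field_simp
    ring
  rw [hrw]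
  gcongr
  linarith

theorem entropy_le_log_add_of_hasSum_mul_abs_sub {p : ℤ → ℝ} {m : ℤ} {s D : ℝ}
    (hp0 : ∀ n, 0 ≤ p n) (hp : HasSum p 1) (hs : 0 < s)
    (hD : HasSum (fun n : ℤ => p n * |(n : ℝ) - m|) D) :
    entropy p ≤ log s + 1 + (1 + D) / s := by
  set r := exp (-s⁻¹)
  have hq : HasSum (fun n : ℤ => s⁻¹ * r ^ (n - m).natAbs) (s⁻¹ * ((1 + r) / (1 - r))) :=
    (hasSum_pow_natAbs_sub (exp_pos _).le (exp_lt_one_iff.2 (by simpa using hs)) m).mul_left _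
  have hlog : ∀ n : ℤ, -(p n * log (s⁻¹ * r ^ (n - m).natAbs)) =
      log s * p n + s⁻¹ * (p n * |(n : ℝ) - m|) := by
    intro n
    rw [log_mul (by positivity) (by positivity), log_inv, log_pow, log_exp, Nat.cast_natAbs]
    push_cast
    ring
  have hc : HasSum (fun n : ℤ => -(p n * log (s⁻¹ * r ^ (n - m).natAbs)))
      (log s * 1 + s⁻¹ * D) := by
    simpa only [hlog] using (hp.mul_left _).add (hD.mul_left _)
  have hqs : s⁻¹ * ((1 + r) / (1 - r)) ≤ s⁻¹ + 2 :=
    calc _ ≤ s⁻¹ * (1 + 2 / s⁻¹) := by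
          gcongr; exact one_add_exp_neg_div_one_sub_exp_neg_le (inv_pos.2 hs)
      _ = s⁻¹ + 2 := by field_simp
  calc entropy p ≤ s⁻¹ * ((1 + r) / (1 - r)) - 1 + (log s * 1 + s⁻¹ * D) :=
        entropy_le_of_hasSum hp0 hp (fun n => by positivity) hq hc
    _ ≤ log s + 1 + (1 + D) / s := by
        linarith [show (1 + D) / s = s⁻¹ + s⁻¹ * D by ring]

lemma summable_mul_sub_sq {X : Type*} {p f : X → ℝ} (h0 : Summable p)
    (h1 : Summable fun x => p x * f x) (h2 : Summable fun x => p x * f x ^ 2) (c : ℝ) :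
    Summable fun x => p x * (f x - c) ^ 2 := by
  have h := (h2.sub (h1.mul_left (2 * c))).add (h0.mul_left (c ^ 2))
  refine h.congr fun x => ?_
  ring

lemma abs_sub_floor_le (x c : ℝ) : |x - ⌊c⌋| ≤ 3 / 2 + (x - c) ^ 2 / 2 := by
  have hfloor : |c - ⌊c⌋| ≤ 1 := by
    rw [abs_of_nonneg (sub_nonneg.2 (Int.floor_le c))]
    linarith [Int.lt_floor_add_one c]
  have hamgm : |x - c| ≤ (1 + (x - c) ^ 2) / 2 := by
    nlinarith [sq_nonneg (|x - c| - 1), sq_abs (x - c)]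
  linarith [abs_sub_le x c ⌊c⌋]

lemma exists_hasSum_mul_abs_sub_floor_le {X : Type*} {p f : X → ℝ} {c V : ℝ}
    (hp0 : ∀ x, 0 ≤ p x) (hp : HasSum p 1) (hV : HasSum (fun x => p x * (f x - c) ^ 2) V) :
    ∃ D, HasSum (fun x => p x * |f x - ⌊c⌋|) D ∧ D ≤ 3 / 2 + V / 2 := by
  have hle : ∀ x, p x * |f x - ⌊c⌋| ≤ 3 / 2 * p x + 1 / 2 * (p x * (f x - c) ^ 2) :=
    fun x => by
      nlinarith [mul_le_mul_of_nonneg_left (abs_sub_floor_le (f x) c) (hp0 x)]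
  have hbound : HasSum (fun x => 3 / 2 * p x + 1 / 2 * (p x * (f x - c) ^ 2))
      (3 / 2 * 1 + 1 / 2 * V) :=
    (hp.mul_left _).add (hV.mul_left _)
  have hsum : Summable fun x => p x * |f x - ⌊c⌋| :=
    Summable.of_nonneg_of_le (fun x => mul_nonneg (hp0 x) (abs_nonneg _)) hle hbound.summable
  exact ⟨_, hsum.hasSum, by linarith [hasSum_le hle hsum.hasSum hbound]⟩

/-- There is a constant `C` such that every integer-valued random variable `N`
(described by its distribution `p` on `ℤ`) with finite variance satisfies
`H(N) ≤ C + max(0, log Var N)`. -/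
theorem entropy_le_log_variance :
    ∃ C : ℝ, ∀ p : ℤ → ℝ, (∀ n, 0 ≤ p n) → HasSum p 1 →
      (Summable fun n : ℤ => p n * (n : ℝ)) →
      (Summable fun n : ℤ => p n * (n : ℝ) ^ 2) →
      entropy p ≤
        C + max 0 (Real.log (∑' n : ℤ, p n * ((n : ℝ) - ∑' k : ℤ, p k * (k : ℝ)) ^ 2)) := by
  refine ⟨4, fun p hp0 hp hm1 hm2 => ?_⟩
  set μ := ∑' k : ℤ, p k * (k : ℝ)
  have hV := (summable_mul_sub_sq hp.summable hm1 hm2 μ).hasSum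
  set V := ∑' n : ℤ, p n * ((n : ℝ) - μ) ^ 2
  have hV0 : 0 ≤ V := hV.nonneg fun n => mul_nonneg (hp0 n) (sq_nonneg _)
  obtain ⟨D, hD, hDV⟩ := exists_hasSum_mul_abs_sub_floor_le hp0 hp hV
  have hs : 1 ≤ max 1 V := le_max_left 1 V
  have hDs : (1 + D) / max 1 V ≤ 3 := by
    rw [div_le_iff₀ (by linarith)]
    linarith [le_max_right 1 V]
  change entropy p ≤ 4 + log⁺ V
  rw [posLog_eq_log_max_one hV0]
  linarith [entropy_le_log_add_of_hasSum_mul_abs_sub (s := max 1 V) hp0 hp (by linarith) hD]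
end

section
/- If a family {μ_i} of probability measures on a countable group is both tight and entropy-tight, then the family of all n-fold convolutions {μ_{i_1} * ⋯ * μ_{i_n}} (for any fixed n, over all choices of indices) is also tight and entropy-tight. -/
open Real

/-- A probability measure on a countable set, given by its mass function. -/
def IsProb {X : Type*} (μ : X → ℝ) : Prop := (∀ x, 0 ≤ μ x) ∧ HasSum μ 1

/-- A family of measures is tight if the masses outside a single finite set are
uniformly small. -/
def Tight {ι X : Type*} (μ : ι → X → ℝ) : Prop :=
  ∀ ε > (0 : ℝ), ∃ K : Finset X, ∀ i, (∑' x, ((↑K : Set X)ᶜ).indicator (μ i) x) < ε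

/-- A family of measures is entropy-tight if the entropy contributions outside a
single finite set are uniformly small. -/
def EntTight {ι X : Type*} (μ : ι → X → ℝ) : Prop :=
  ∀ ε > (0 : ℝ), ∃ K : Finset X, ∀ i,
    (∑' x, ((↑K : Set X)ᶜ).indicator (fun y => negMulLog (μ i y)) x) < ε

/-- Convolution of measures on a group. -/
noncomputable def conv {G : Type*} [Group G] (μ ν : G → ℝ) : G → ℝ :=
  fun z => ∑' x, μ x * ν (x⁻¹ * z)

/-- Convolution of a finite list of measures (empty list gives the point mass at 1). -/
noncomputable def convList {G : Type*} [Group G] [DecidableEq G] :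
    List (G → ℝ) → G → ℝ
  | [] => fun g => if g = 1 then 1 else 0
  | μ :: l => conv μ (convList l)


open scoped ENNReal Pointwise

/-!
If `x * w ∉ K * K'` then `x ∉ K` or `w ∉ K'`, so the mass of `μ * ν` outside `K * K'` is at
most the mass of `μ` outside `K` plus that of `ν` outside `K'`. For the entropy, with
`η = negMulLog`, subadditivity `η (∑ aₓ) ≤ ∑ η aₓ` (total mass `≤ 1`) and
`η (s * t) = t * η s + s * η t` give `η ∘ (μ * ν) ≤ (η ∘ μ) * ν + μ * (η ∘ ν)`. Splitting the
pairs `(x, w)` in the same way bounds each term by an entropy tail plus `η ≤ 1` summed over a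
finite set times a mass tail, and tightness makes this small when the finite sets are chosen in
the right order. A convolution with a measure of infinite entropy has infinite entropy, so only
finite-entropy members need the estimate. Induction on `n` concludes. The sums are computed in
`ℝ≥0∞`, where double sums can be interchanged freely.
-/

section Tail

variable {X : Type*}

noncomputable def tailSum (K : Finset X) (f : X → ℝ≥0∞) : ℝ≥0∞ :=
  ∑' x, ((↑K : Set X)ᶜ).indicator f x

lemma tailSum_anti {K K' : Finset X} (h : K ⊆ K') (f : X → ℝ≥0∞) :
    tailSum K' f ≤ tailSum K f :=
  ENNReal.tsum_le_tsum <| Set.indicator_le_indicator_of_subset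
    (Set.compl_subset_compl.2 (Finset.coe_subset.2 h)) fun _ => zero_le

lemma tailSum_mono (K : Finset X) {f g : X → ℝ≥0∞} (h : f ≤ g) :
    tailSum K f ≤ tailSum K g :=
  ENNReal.tsum_le_tsum fun x => Set.indicator_le_indicator (h x)

lemma tailSum_add (K : Finset X) (f g : X → ℝ≥0∞) :
    tailSum K (f + g) = tailSum K f + tailSum K g := by
  simp only [tailSum, Set.indicator_add', Pi.add_apply]
  exact ENNReal.tsum_add

lemma tailSum_ofReal {f : X → ℝ} (hf : ∀ x, 0 ≤ f x) (hs : Summable f) (K : Finset X) :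
    tailSum K (fun x => ENNReal.ofReal (f x))
      = ENNReal.ofReal (∑' x, ((↑K : Set X)ᶜ).indicator f x) := by
  rw [ENNReal.ofReal_tsum_of_nonneg (Set.indicator_nonneg fun x _ => hf x) (hs.indicator _)]
  exact tsum_congr fun x => congrFun (Set.indicator_comp_of_zero ENNReal.ofReal_zero) x

lemma summable_of_summable_indicator_compl {f : X → ℝ} (K : Finset X)
    (h : Summable (((↑K : Set X)ᶜ).indicator f)) : Summable f :=
  (Set.toFinite (↑K : Set X)).summable_compl_iff.1 (summable_subtype_iff_indicator.2 h)

-- A divergent `tsum` is `0` in `ℝ`, so `Tight` only constrains the summable members.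
lemma tight_iff_tailSum_le {ι : Type*} {f : ι → X → ℝ} (hf : ∀ i x, 0 ≤ f i x) :
    Tight f ↔ ∀ δ > 0, ∃ K : Finset X, ∀ i, Summable (f i) →
      tailSum K (fun x => ENNReal.ofReal (f i x)) ≤ δ := by
  constructor
  · intro h δ hδ
    rcases eq_or_ne δ ⊤ with rfl | hδ'
    · exact ⟨∅, fun _ _ => le_top⟩
    obtain ⟨K, hK⟩ := h δ.toReal (ENNReal.toReal_pos hδ.ne' hδ')
    refine ⟨K, fun i hs => ?_⟩
    rw [tailSum_ofReal (hf i) hs, ← ENNReal.ofReal_toReal hδ']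
    exact ENNReal.ofReal_le_ofReal (hK i).le
  · intro h ε hε
    obtain ⟨K, hK⟩ := h (ENNReal.ofReal (ε / 2)) (by simpa using hε)
    refine ⟨K, fun i => ?_⟩
    by_cases hs : Summable (f i)
    · have := hK i hs
      rw [tailSum_ofReal (hf i) hs, ENNReal.ofReal_le_ofReal_iff (by positivity)] at this
      linarith
    · rw [tsum_eq_zero_of_not_summable (mt (summable_of_summable_indicator_compl K) hs)]
      exact hε

lemma entTight_iff_tight {ι : Type*} {μ : ι → X → ℝ} :
    EntTight μ ↔ Tight fun i x => negMulLog (μ i x) :=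
  Iff.rfl

lemma Tight.comp {ι κ : Type*} {f : ι → X → ℝ} (h : Tight f) (e : κ → ι) :
    Tight fun k => f (e k) :=
  fun ε hε => (h ε hε).imp fun _ hK k => hK (e k)

lemma EntTight.comp {ι κ : Type*} {μ : ι → X → ℝ} (h : EntTight μ) (e : κ → ι) :
    EntTight fun k => μ (e k) :=
  Tight.comp h e

lemma tight_of_eq_zero {ι : Type*} {f : ι → X → ℝ} (K : Finset X)
    (h : ∀ i, ∀ x ∉ K, f i x = 0) : Tight f := by
  refine fun ε hε => ⟨K, fun i => ?_⟩
  rw [tsum_congr fun x => Set.indicator_apply_eq_zero.2 fun hx => h i x hx, tsum_zero]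
  exact hε

end Tail

section Convolution

variable {G : Type*} [Group G]

noncomputable def econv (a b : G → ℝ≥0∞) (z : G) : ℝ≥0∞ :=
  ∑' x, a x * b (x⁻¹ * z)

lemma tsum_indicator_econv (S : Set G) (a b : G → ℝ≥0∞) :
    ∑' z, S.indicator (econv a b) z = ∑' x, ∑' w, S.indicator (fun _ => a x * b w) (x * w) := by
  calc ∑' z, S.indicator (econv a b) z
      = ∑' z, ∑' x, S.indicator (fun z => a x * b (x⁻¹ * z)) z := by
        refine tsum_congr fun z => ?_
        by_cases hz : z ∈ S <;> simp [econv, hz]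
    _ = ∑' x, ∑' z, S.indicator (fun z => a x * b (x⁻¹ * z)) z := ENNReal.tsum_comm
    _ = ∑' x, ∑' w, S.indicator (fun _ => a x * b w) (x * w) := by
        refine tsum_congr fun x => ?_
        rw [← (Equiv.mulLeft x).tsum_eq]
        refine tsum_congr fun w => ?_
        by_cases hw : x * w ∈ S <;> simp [hw]

lemma tsum_econv (a b : G → ℝ≥0∞) : ∑' z, econv a b z = (∑' x, a x) * ∑' w, b w := by
  simpa [ENNReal.tsum_mul_left, ENNReal.tsum_mul_right] using
    tsum_indicator_econv Set.univ a b

variable [DecidableEq G]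

lemma tailSum_mul_econv_le {K K' : Finset G} {a b : G → ℝ≥0∞} {c : G → G → ℝ≥0∞}
    (hc : ∀ x w, ¬(x ∈ K ∧ w ∈ K') → a x * b w ≤ c x w) :
    tailSum (K * K') (econv a b) ≤ ∑' x, ∑' w, c x w := by
  rw [tailSum, tsum_indicator_econv]
  refine ENNReal.tsum_le_tsum fun x => ENNReal.tsum_le_tsum fun w => ?_
  by_cases hxw : x ∈ K ∧ w ∈ K'
  · simp [hxw.1, hxw.2, Set.mul_mem_mul]
  · exact (Set.indicator_le_self _ _ _).trans (hc x w hxw)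

lemma tailSum_econv_le_left (K K' : Finset G) (a b : G → ℝ≥0∞) :
    tailSum (K * K') (econv a b) ≤ tailSum K a * ∑' w, b w + (∑ x ∈ K, a x) * tailSum K' b := by
  refine (tailSum_mul_econv_le (c := fun x w => ((↑K : Set G)ᶜ).indicator a x * b w
    + (↑K : Set G).indicator a x * ((↑K' : Set G)ᶜ).indicator b w) fun x w hxw => ?_).trans_eq ?_
  · by_cases hx : x ∈ K <;> by_cases hw : w ∈ K' <;> simp_all
  · simp only [ENNReal.tsum_add, ENNReal.tsum_mul_left, ENNReal.tsum_mul_right, tailSum]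
    rw [sum_eq_tsum_indicator]

lemma tailSum_econv_le_right (K K' : Finset G) (a b : G → ℝ≥0∞) :
    tailSum (K * K') (econv a b) ≤ (∑' x, a x) * tailSum K' b + tailSum K a * ∑ w ∈ K', b w := by
  refine (tailSum_mul_econv_le (c := fun x w => a x * ((↑K' : Set G)ᶜ).indicator b w
    + ((↑K : Set G)ᶜ).indicator a x * (↑K' : Set G).indicator b w) fun x w hxw => ?_).trans_eq ?_
  · by_cases hx : x ∈ K <;> by_cases hw : w ∈ K' <;> simp_all
  · simp only [ENNReal.tsum_add, ENNReal.tsum_mul_left, ENNReal.tsum_mul_right, tailSum]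
    rw [sum_eq_tsum_indicator]

end Convolution

section Probability

variable {X : Type*} {f : X → ℝ}

lemma IsProb.le_one (h : IsProb f) (x : X) : f x ≤ 1 :=
  h.2.tsum_eq ▸ h.2.summable.le_tsum x fun y _ => h.1 y

lemma IsProb.tsum_ofReal (h : IsProb f) : ∑' x, ENNReal.ofReal (f x) = 1 := by
  rw [← ENNReal.ofReal_tsum_of_nonneg h.1 h.2.summable, h.2.tsum_eq, ENNReal.ofReal_one]

lemma IsProb.exists_pos (h : IsProb f) : ∃ x, 0 < f x := by
  by_contra! hf
  have : f = 0 := funext fun x => (hf x).antisymm (h.1 x)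
  simpa [this] using h.2.tsum_eq

lemma isProb_of_tsum_ofReal (hf : ∀ x, 0 ≤ f x) (h : ∑' x, ENNReal.ofReal (f x) = 1) :
    IsProb f := by
  have hs : Summable f :=
    (ENNReal.summable_toReal (h ▸ ENNReal.one_ne_top)).congr fun x => ENNReal.toReal_ofReal (hf x)
  refine ⟨hf, ?_⟩
  rw [← ENNReal.ofReal_tsum_of_nonneg hf hs, ENNReal.ofReal_eq_one] at h
  exact h ▸ hs.hasSum

variable {G : Type*} [Group G] {μ ν : G → ℝ}

lemma IsProb.summable_mul_apply (hμ : IsProb μ) (hν : IsProb ν) (z : G) :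
    Summable fun x => μ x * ν (x⁻¹ * z) :=
  hμ.2.summable.of_nonneg_of_le (fun x => mul_nonneg (hμ.1 x) (hν.1 _))
    fun x => mul_le_of_le_one_right (hμ.1 x) (hν.le_one _)

lemma IsProb.ofReal_conv (hμ : IsProb μ) (hν : IsProb ν) :
    (fun z => ENNReal.ofReal (conv μ ν z))
      = econv (fun x => ENNReal.ofReal (μ x)) (fun x => ENNReal.ofReal (ν x)) := by
  funext z
  rw [conv, ENNReal.ofReal_tsum_of_nonneg (fun x => mul_nonneg (hμ.1 x) (hν.1 _))
    (hμ.summable_mul_apply hν z)]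
  exact tsum_congr fun x => ENNReal.ofReal_mul (hμ.1 x)

lemma isProb_conv (hμ : IsProb μ) (hν : IsProb ν) : IsProb (conv μ ν) := by
  refine isProb_of_tsum_ofReal (fun z => tsum_nonneg fun x => mul_nonneg (hμ.1 x) (hν.1 _)) ?_
  rw [hμ.ofReal_conv hν, tsum_econv, hμ.tsum_ofReal, hν.tsum_ofReal, one_mul]

end Probability

section Entropy

lemma negMulLog_le_one {t : ℝ} (ht : 0 ≤ t) : negMulLog t ≤ 1 :=
  (negMulLog_le_one_sub_self ht).trans (by linarith)

lemma negMulLog_le_negMulLog {s t : ℝ} (hs : 0 ≤ s) (hst : s ≤ t) (ht : t ≤ exp (-1)) :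
    negMulLog s ≤ negMulLog t := by
  have := mul_log_strictAntiOn.antitoneOn ⟨hs, hst.trans ht⟩ ⟨hs.trans hst, ht⟩ hst
  simp only [negMulLog_eq_neg]
  linarith

variable {X : Type*}

lemma sum_ofReal_negMulLog_le_card (K : Finset X) {f : X → ℝ} (hf : ∀ x, 0 ≤ f x) :
    ∑ x ∈ K, ENNReal.ofReal (negMulLog (f x)) ≤ K.card := by
  simpa using K.sum_le_card_nsmul _ 1 fun x _ => ENNReal.ofReal_le_one.2 (negMulLog_le_one (hf x))

lemma ofReal_negMulLog_tsum_le {a : X → ℝ} (ha : ∀ x, 0 ≤ a x) (hs : Summable a)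
    (h1 : ∑' x, a x ≤ 1) :
    ENNReal.ofReal (negMulLog (∑' x, a x)) ≤ ∑' x, ENNReal.ofReal (negMulLog (a x)) := by
  have hlog : 0 ≤ -log (∑' x, a x) := neg_nonneg.2 (log_nonpos (tsum_nonneg ha) h1)
  have heq : negMulLog (∑' x, a x) = ∑' x, a x * -log (∑' y, a y) := by
    rw [tsum_mul_right, negMulLog]; ring
  rw [heq, ENNReal.ofReal_tsum_of_nonneg (fun x => mul_nonneg (ha x) hlog) (hs.mul_right _)]
  refine ENNReal.tsum_le_tsum fun x => ENNReal.ofReal_le_ofReal ?_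
  rcases (ha x).eq_or_lt with hx | hx
  · simp [← hx]
  · calc a x * -log (∑' y, a y) ≤ a x * -log (a x) := by
          gcongr
          exact hs.le_tsum x fun y _ => ha y
      _ = negMulLog (a x) := by rw [negMulLog]; ring

end Entropy

section ConvolutionEntropy

variable {G : Type*} [Group G] {μ ν : G → ℝ}

lemma IsProb.ofReal_negMulLog_conv_le (hμ : IsProb μ) (hν : IsProb ν) (z : G) :
    ENNReal.ofReal (negMulLog (conv μ ν z))
      ≤ econv (fun x => ENNReal.ofReal (negMulLog (μ x))) (fun x => ENNReal.ofReal (ν x)) z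
        + econv (fun x => ENNReal.ofReal (μ x)) (fun x => ENNReal.ofReal (negMulLog (ν x))) z := by
  calc ENNReal.ofReal (negMulLog (conv μ ν z))
      ≤ ∑' x, ENNReal.ofReal (negMulLog (μ x * ν (x⁻¹ * z))) :=
        ofReal_negMulLog_tsum_le (fun x => mul_nonneg (hμ.1 x) (hν.1 _))
          (hμ.summable_mul_apply hν z) ((isProb_conv hμ hν).le_one z)
    _ = _ := by
        rw [econv, econv, ← ENNReal.tsum_add]
        refine tsum_congr fun x => ?_
        rw [negMulLog_mul, ENNReal.ofReal_add
            (mul_nonneg (hν.1 _) (negMulLog_nonneg (hμ.1 x) (hμ.le_one x)))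
            (mul_nonneg (hμ.1 x) (negMulLog_nonneg (hν.1 _) (hν.le_one _))),
          ENNReal.ofReal_mul (hν.1 _), ENNReal.ofReal_mul (hμ.1 x), mul_comm (ENNReal.ofReal (ν _))]

variable [DecidableEq G]

lemma IsProb.tailSum_negMulLog_conv_le (hμ : IsProb μ) (hν : IsProb ν) {Ka K K' : Finset G}
    (hKa : Ka ⊆ K) :
    tailSum (K * K') (fun z => ENNReal.ofReal (negMulLog (conv μ ν z)))
      ≤ tailSum Ka (fun x => ENNReal.ofReal (negMulLog (μ x)))
          + Ka.card * tailSum K' (fun x => ENNReal.ofReal (ν x))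
        + (tailSum K' (fun x => ENNReal.ofReal (negMulLog (ν x)))
          + K'.card * tailSum K (fun x => ENNReal.ofReal (μ x))) := by
  set Eμ := fun x => ENNReal.ofReal (negMulLog (μ x))
  set Eν := fun x => ENNReal.ofReal (negMulLog (ν x))
  set Mμ := fun x => ENNReal.ofReal (μ x)
  set Mν := fun x => ENNReal.ofReal (ν x)
  calc tailSum (K * K') (fun z => ENNReal.ofReal (negMulLog (conv μ ν z)))
      ≤ tailSum (K * K') (econv Eμ Mν + econv Mμ Eν) :=
        tailSum_mono _ (hμ.ofReal_negMulLog_conv_le hν)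
    _ = tailSum (K * K') (econv Eμ Mν) + tailSum (K * K') (econv Mμ Eν) := tailSum_add _ _ _
    _ ≤ (tailSum Ka Eμ * ∑' w, Mν w + (∑ x ∈ Ka, Eμ x) * tailSum K' Mν)
        + ((∑' x, Mμ x) * tailSum K' Eν + tailSum K Mμ * ∑ w ∈ K', Eν w) :=
        add_le_add ((tailSum_anti (Finset.mul_subset_mul_right hKa) _).trans
          (tailSum_econv_le_left _ _ _ _)) (tailSum_econv_le_right _ _ _ _)
    _ ≤ _ := by
        rw [hν.tsum_ofReal, hμ.tsum_ofReal, mul_one, one_mul, mul_comm (tailSum K Mμ)]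
        gcongr
        · exact sum_ofReal_negMulLog_le_card _ hμ.1
        · exact sum_ofReal_negMulLog_le_card _ hν.1

end ConvolutionEntropy

section Degenerate

lemma Summable.negMulLog_of_mul_le {X : Type*} {f g : X → ℝ} (hf : Summable f)
    (hg0 : ∀ x, 0 ≤ g x) (hg1 : ∀ x, g x ≤ 1) {c : ℝ} (hc0 : 0 < c) (hc1 : c ≤ 1)
    (hle : ∀ x, c * g x ≤ f x) (h : Summable fun x => negMulLog (f x)) :
    Summable fun x => negMulLog (g x) := by
  refine Summable.of_norm_bounded_eventually (h.mul_left c⁻¹) ?_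
  filter_upwards [hf.tendsto_cofinite_zero.eventually (eventually_lt_nhds (exp_pos (-1)))]
    with x hx
  rw [Real.norm_of_nonneg (negMulLog_nonneg (hg0 x) (hg1 x)), le_inv_mul_iff₀ hc0]
  calc c * negMulLog (g x) ≤ negMulLog (c * g x) := by
        rw [negMulLog_mul]
        nlinarith [hg0 x, negMulLog_nonneg hc0.le hc1]
    _ ≤ negMulLog (f x) := negMulLog_le_negMulLog (mul_nonneg hc0.le (hg0 x)) (hle x) hx.le

variable {G : Type*} [Group G] {μ ν : G → ℝ}

lemma IsProb.summable_negMulLog_of_conv (hμ : IsProb μ) (hν : IsProb ν)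
    (h : Summable fun z => negMulLog (conv μ ν z)) :
    (Summable fun x => negMulLog (μ x)) ∧ Summable fun x => negMulLog (ν x) := by
  have hs := (isProb_conv hμ hν).2.summable
  have le_conv (x w : G) : μ x * ν w ≤ conv μ ν (x * w) := by
    have := (hμ.summable_mul_apply hν (x * w)).le_tsum x fun y _ => mul_nonneg (hμ.1 y) (hν.1 _)
    rwa [inv_mul_cancel_left] at this
  have shift (e : G ≃ G) {F : G → ℝ} (hF : Summable F) : Summable fun x => F (e x) :=
    e.summable_iff.2 hF
  obtain ⟨w₀, hw₀⟩ := hν.exists_pos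
  obtain ⟨x₀, hx₀⟩ := hμ.exists_pos
  have hμs := shift (Equiv.mulRight w₀) hs
  have hμh := shift (Equiv.mulRight w₀) h
  have hνs := shift (Equiv.mulLeft x₀) hs
  have hνh := shift (Equiv.mulLeft x₀) h
  exact ⟨hμs.negMulLog_of_mul_le hμ.1 hμ.le_one hw₀ (hν.le_one w₀)
      (fun x => by rw [mul_comm]; exact le_conv x w₀) hμh,
    hνs.negMulLog_of_mul_le hν.1 hν.le_one hx₀ (hμ.le_one x₀) (le_conv x₀) hνh⟩

end Degenerate

section Step

variable {G : Type*} [Group G] [DecidableEq G] {ι κ : Type*} {μ : ι → G → ℝ} {ν : κ → G → ℝ}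

lemma tight_conv (hμ : ∀ i, IsProb (μ i)) (hν : ∀ k, IsProb (ν k)) (hμt : Tight μ)
    (hνt : Tight ν) : Tight fun p : ι × κ => conv (μ p.1) (ν p.2) := by
  rw [tight_iff_tailSum_le fun i => (hμ i).1] at hμt
  rw [tight_iff_tailSum_le fun k => (hν k).1] at hνt
  refine (tight_iff_tailSum_le fun (p : ι × κ) => (isProb_conv (hμ p.1) (hν p.2)).1).2
    fun δ hδ => ?_
  obtain ⟨K, hK⟩ := hμt (δ / 2) (ENNReal.half_pos hδ.ne')
  obtain ⟨K', hK'⟩ := hνt (δ / 2) (ENNReal.half_pos hδ.ne')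
  refine ⟨K * K', fun ⟨i, k⟩ _ => ?_⟩
  calc tailSum (K * K') (fun z => ENNReal.ofReal (conv (μ i) (ν k) z))
      ≤ tailSum K (fun x => ENNReal.ofReal (μ i x)) * ∑' w, ENNReal.ofReal (ν k w)
        + (∑ x ∈ K, ENNReal.ofReal (μ i x)) * tailSum K' (fun x => ENNReal.ofReal (ν k x)) :=
        (hμ i).ofReal_conv (hν k) ▸ tailSum_econv_le_left _ _ _ _
    _ ≤ δ / 2 * 1 + 1 * (δ / 2) := by
        rw [(hν k).tsum_ofReal]
        gcongr
        · exact hK i (hμ i).2.summable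
        · exact (ENNReal.sum_le_tsum K).trans_eq (hμ i).tsum_ofReal
        · exact hK' k (hν k).2.summable
    _ = δ := by rw [mul_one, one_mul, ENNReal.add_halves]

lemma entTight_conv (hμ : ∀ i, IsProb (μ i)) (hν : ∀ k, IsProb (ν k)) (hμt : Tight μ)
    (hνt : Tight ν) (hμe : EntTight μ) (hνe : EntTight ν) :
    EntTight fun p : ι × κ => conv (μ p.1) (ν p.2) := by
  have entropy_nonneg {f : G → ℝ} (hf : IsProb f) (x : G) : 0 ≤ negMulLog (f x) :=
    negMulLog_nonneg (hf.1 x) (hf.le_one x)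
  rw [tight_iff_tailSum_le fun i => (hμ i).1] at hμt
  rw [tight_iff_tailSum_le fun k => (hν k).1] at hνt
  rw [entTight_iff_tight, tight_iff_tailSum_le fun i => entropy_nonneg (hμ i)] at hμe
  rw [entTight_iff_tight, tight_iff_tailSum_le fun k => entropy_nonneg (hν k)] at hνe
  refine (tight_iff_tailSum_le fun (p : ι × κ) => entropy_nonneg (isProb_conv (hμ p.1) (hν p.2))).2
    fun δ hδ => ?_
  have hδ4 : 0 < δ / 4 := ENNReal.div_pos hδ.ne' (by norm_num)
  have hδn (n : ℕ) : 0 < δ / 4 / n := ENNReal.div_pos hδ4.ne' (ENNReal.natCast_ne_top n)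
  -- `Kc` and `Kd` are chosen after `Ka` and `Kb ∪ Kc`, whose sizes multiply their tails.
  obtain ⟨Ka, hKa⟩ := hμe (δ / 4) hδ4
  obtain ⟨Kb, hKb⟩ := hνe (δ / 4) hδ4
  obtain ⟨Kc, hKc⟩ := hνt _ (hδn Ka.card)
  obtain ⟨Kd, hKd⟩ := hμt _ (hδn (Kb ∪ Kc).card)
  refine ⟨(Ka ∪ Kd) * (Kb ∪ Kc), fun ⟨i, k⟩ hs => ?_⟩
  obtain ⟨hsμ, hsν⟩ := (hμ i).summable_negMulLog_of_conv (hν k) hs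
  calc _ ≤ _ := (hμ i).tailSum_negMulLog_conv_le (hν k) Finset.subset_union_left
    _ ≤ δ / 4 + δ / 4 + (δ / 4 + δ / 4) := by
        gcongr
        · exact hKa i hsμ
        · exact (mul_le_mul' le_rfl ((tailSum_anti Finset.subset_union_right _).trans
            (hKc k (hν k).2.summable))).trans ENNReal.mul_div_le
        · exact (tailSum_anti Finset.subset_union_left _).trans (hKb k hsν)
        · exact (mul_le_mul' le_rfl ((tailSum_anti Finset.subset_union_right _).trans
            (hKd i (hμ i).2.summable))).trans ENNReal.mul_div_le
    _ = δ := by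
        rw [show δ / 4 + δ / 4 + (δ / 4 + δ / 4) = δ / 4 * 4 by ring,
          ENNReal.div_mul_cancel (by norm_num) (by norm_num)]

end Step

theorem conv_tight_and_entTight_general {ι G : Type*} [Group G] [DecidableEq G]
    (μ : ι → G → ℝ) (hprob : ∀ i, IsProb (μ i))
    (ht : Tight μ) (he : EntTight μ) (n : ℕ) :
    Tight (fun l : Fin n → ι => convList (List.ofFn fun j => μ (l j))) ∧
    EntTight (fun l : Fin n → ι => convList (List.ofFn fun j => μ (l j))) := by
  suffices h : ∀ m, (∀ l : Fin m → ι, IsProb (convList (List.ofFn fun j => μ (l j)))) ∧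
      Tight (fun l : Fin m → ι => convList (List.ofFn fun j => μ (l j))) ∧
      EntTight (fun l : Fin m → ι => convList (List.ofFn fun j => μ (l j))) from (h n).2
  intro m
  induction m with
  | zero =>
    refine ⟨fun _ => ⟨fun _ => ite_nonneg zero_le_one le_rfl, hasSum_ite_eq 1 1⟩,
      tight_of_eq_zero {1} fun _ g hg => ?_, tight_of_eq_zero {1} fun _ g hg => ?_⟩ <;>
    simp_all [convList]
  | succ m ih =>
    obtain ⟨hp, hm, hme⟩ := ih
    have hsucc (l : Fin (m + 1) → ι) : convList (List.ofFn fun j => μ (l j))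
        = conv (μ (l 0)) (convList (List.ofFn fun j => μ (Fin.tail l j))) := by
      rw [List.ofFn_succ]; rfl
    simp only [hsucc]
    exact ⟨fun l => isProb_conv (hprob _) (hp _),
      (tight_conv hprob hp ht hm).comp fun l : Fin (m + 1) → ι => (l 0, Fin.tail l),
      (entTight_conv hprob hp ht hm he hme).comp fun l : Fin (m + 1) → ι => (l 0, Fin.tail l)⟩

/-- If a family of probability measures on a countable group is tight and
entropy-tight, then for every fixed `n` the family of all `n`-fold convolutions
`μ_{i₁} * ⋯ * μ_{iₙ}` is also tight and entropy-tight. -/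
theorem conv_tight_and_entTight {ι G : Type*} [Group G] [Countable G] [DecidableEq G]
    (μ : ι → G → ℝ) (hprob : ∀ i, IsProb (μ i))
    (ht : Tight μ) (he : EntTight μ) (n : ℕ) :
    Tight (fun l : Fin n → ι => convList (List.ofFn fun j => μ (l j))) ∧
    EntTight (fun l : Fin n → ι => convList (List.ofFn fun j => μ (l j))) :=
  conv_tight_and_entTight_general μ hprob ht he n
end

section
/- If probability measures μ_n on a countable set converge pointwise (weakly) to a probability measure μ, then H(μ_n) → H(μ) if and only if the sequence {μ_n} is entropy-tight. -/
open Real Filter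

/-- Shannon entropy, valued in `ℝ≥0∞` (for probability measures all terms are ≥ 0). -/
noncomputable def entE {X : Type*} (μ : X → ℝ) : ENNReal :=
  ∑' x, ENNReal.ofReal (negMulLog (μ x))

/-!
Write `H(μ) = ∑ₓ h(μ x)` with `h = ofReal ∘ negMulLog` continuous and nonnegative, and split every
sum over a finite set `K` into `∑_{x ∈ K}` plus a tail over `Kᶜ`. The finite parts converge by
pointwise convergence. If `H(μₙ) → H(ν) < ⊤`, the tails over `K` converge to the tail of `ν`, which
is small for large `K`; the finitely many remaining `μₙ` have finite entropy and are absorbed by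
enlarging `K`. Conversely, lower semicontinuity of a sum of nonnegative terms (Fatou) gives
`H(ν) ≤ liminf H(μₙ)`, and uniformly small tails give `limsup H(μₙ) ≤ H(ν)`.
-/

open scoped ENNReal Topology

namespace ENNReal

variable {X : Type*}

theorem exists_tsum_compl_lt {f : X → ℝ≥0∞} (hf : ∑' x, f x ≠ ∞) {ε : ℝ≥0∞} (hε : 0 < ε) :
    ∃ K : Finset X, ∑' x : ↥(K : Set X)ᶜ, f x < ε :=
  ((tendsto_order.1 (tendsto_tsum_compl_atTop_zero hf)).2 ε hε).exists

theorem exists_forall_tsum_compl_lt_of_eventually {f : ℕ → X → ℝ≥0∞}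
    (hf : ∀ n, ∑' x, f n x ≠ ∞) {ε : ℝ≥0∞} (hε : 0 < ε) {K₀ : Finset X}
    (hK₀ : ∀ᶠ n in atTop, ∑' x : ↥(K₀ : Set X)ᶜ, f n x < ε) :
    ∃ K : Finset X, ∀ n, ∑' x : ↥(K : Set X)ᶜ, f n x < ε := by
  classical
  obtain ⟨N, hN⟩ := eventually_atTop.1 hK₀
  choose Kn hKn using fun n => exists_tsum_compl_lt (hf n) hε
  have tail_anti : ∀ {n} {K K' : Finset X}, K ⊆ K' →
      ∑' x : ↥(K' : Set X)ᶜ, f n x ≤ ∑' x : ↥(K : Set X)ᶜ, f n x := fun h =>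
    tsum_mono_subtype _ (Set.compl_subset_compl.2 (Finset.coe_subset.2 h))
  refine ⟨K₀ ∪ (Finset.range N).biUnion Kn, fun n => ?_⟩
  rcases le_or_gt N n with hn | hn
  · exact (tail_anti Finset.subset_union_left).trans_lt (hN n hn)
  · refine (tail_anti ?_).trans_lt (hKn n)
    exact (Finset.subset_biUnion_of_mem Kn (Finset.mem_range.2 hn)).trans
      Finset.subset_union_right

theorem eventually_lt_tsum_of_tendsto {ι : Type*} {l : Filter ι} {f : ι → X → ℝ≥0∞}
    {g : X → ℝ≥0∞} (hfg : ∀ x, Tendsto (fun i => f i x) l (𝓝 (g x))) {b : ℝ≥0∞}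
    (hb : b < ∑' x, g x) : ∀ᶠ i in l, b < ∑' x, f i x :=
  (tendsto_pi_nhds.2 hfg).eventually
    (lowerSemicontinuous_tsum (fun x => (continuous_apply x).lowerSemicontinuous) g b hb)

theorem tendsto_tsum_compl {ι : Type*} {l : Filter ι} {f : ι → X → ℝ≥0∞} {g : X → ℝ≥0∞}
    (hfg : ∀ x, Tendsto (fun i => f i x) l (𝓝 (g x))) (hf : ∀ i, ∑' x, f i x ≠ ∞)
    (hg : ∑' x, g x ≠ ∞) (hT : Tendsto (fun i => ∑' x, f i x) l (𝓝 (∑' x, g x)))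
    (K : Finset X) :
    Tendsto (fun i => ∑' x : ↥(K : Set X)ᶜ, f i x) l (𝓝 (∑' x : ↥(K : Set X)ᶜ, g x)) := by
  have tail_eq : ∀ h : X → ℝ≥0∞, ∑' x, h x ≠ ∞ →
      ∑' x : ↥(K : Set X)ᶜ, h x = ∑' x, h x - ∑ x ∈ K, h x := fun h hh =>
    ENNReal.eq_sub_of_add_eq' hh ((add_comm _ _).trans (ENNReal.sum_add_tsum_compl K h))
  rw [tail_eq g hg]
  refine (ENNReal.Tendsto.sub hT (tendsto_finsetSum K fun x _ => hfg x) (Or.inl hg)).congr fun i => ?_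
  exact (tail_eq (f i) (hf i)).symm

theorem tendsto_tsum_of_forall_exists_tsum_compl_lt {ι : Type*} {l : Filter ι}
    {f : ι → X → ℝ≥0∞} {g : X → ℝ≥0∞} (hfg : ∀ x, Tendsto (fun i => f i x) l (𝓝 (g x)))
    (ht : ∀ ε > 0, ∃ K : Finset X, ∀ i, ∑' x : ↥(K : Set X)ᶜ, f i x < ε) :
    Tendsto (fun i => ∑' x, f i x) l (𝓝 (∑' x, g x)) := by
  refine tendsto_order.2 ⟨fun b hb => eventually_lt_tsum_of_tendsto hfg hb, fun a ha => ?_⟩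
  obtain ⟨c, hgc, hca⟩ := exists_between ha
  obtain ⟨K, hK⟩ := ht (a - c) (tsub_pos_of_lt hca)
  have hS : ∀ᶠ i in l, ∑ x ∈ K, f i x < c :=
    (tendsto_finsetSum K fun x _ => hfg x).eventually
      (eventually_lt_nhds ((ENNReal.sum_le_tsum K).trans_lt hgc))
  filter_upwards [hS] with i hi
  calc ∑' x, f i x = ∑ x ∈ K, f i x + ∑' x : ↥(K : Set X)ᶜ, f i x :=
        (ENNReal.sum_add_tsum_compl K (f i)).symm
    _ < c + (a - c) := ENNReal.add_lt_add hi (hK i)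
    _ = a := add_tsub_cancel_of_le hca.le

theorem forall_exists_tsum_compl_lt_of_tendsto_tsum {f : ℕ → X → ℝ≥0∞} {g : X → ℝ≥0∞}
    (hfg : ∀ x, Tendsto (fun n => f n x) atTop (𝓝 (g x))) (hf : ∀ n, ∑' x, f n x ≠ ∞)
    (hg : ∑' x, g x ≠ ∞) (hT : Tendsto (fun n => ∑' x, f n x) atTop (𝓝 (∑' x, g x))) :
    ∀ ε > 0, ∃ K : Finset X, ∀ n, ∑' x : ↥(K : Set X)ᶜ, f n x < ε := by
  intro ε hε
  obtain ⟨K₀, hK₀⟩ := exists_tsum_compl_lt hg hε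
  exact exists_forall_tsum_compl_lt_of_eventually hf hε
    ((tendsto_tsum_compl hfg hf hg hT K₀).eventually (eventually_lt_nhds hK₀))

theorem tendsto_tsum_iff_forall_exists_tsum_compl_lt {f : ℕ → X → ℝ≥0∞} {g : X → ℝ≥0∞}
    (hfg : ∀ x, Tendsto (fun n => f n x) atTop (𝓝 (g x))) (hf : ∀ n, ∑' x, f n x ≠ ∞)
    (hg : ∑' x, g x ≠ ∞) :
    Tendsto (fun n => ∑' x, f n x) atTop (𝓝 (∑' x, g x)) ↔
      ∀ ε > 0, ∃ K : Finset X, ∀ n, ∑' x : ↥(K : Set X)ᶜ, f n x < ε :=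
  ⟨forall_exists_tsum_compl_lt_of_tendsto_tsum hfg hf hg,
    tendsto_tsum_of_forall_exists_tsum_compl_lt hfg⟩

theorem forall_ofReal_pos_iff {P : ℝ≥0∞ → Prop} (hP : Monotone P) :
    (∀ ε : ℝ, 0 < ε → P (ENNReal.ofReal ε)) ↔ ∀ ε > 0, P ε := by
  refine ⟨fun h ε hε => ?_, fun h ε hε => h _ (ofReal_pos.2 hε)⟩
  obtain ⟨r, -, hr, hrε⟩ := lt_iff_exists_real_btwn.1 hε
  exact hP hrε.le (h r (ofReal_pos.1 hr))

end ENNReal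

theorem entropy_tendsto_iff_entTight_general {X : Type*}
    (μ : ℕ → X → ℝ) (ν : X → ℝ)
    (hw : ∀ x, Tendsto (fun n => μ n x) atTop (nhds (ν x)))
    (hfin : ∀ n, entE (μ n) < ⊤) (hfin' : entE ν < ⊤) :
    Tendsto (fun n => entE (μ n)) atTop (nhds (entE ν)) ↔
      ∀ ε : ℝ, 0 < ε → ∃ K : Finset X, ∀ n,
        (∑' x, ((↑K : Set X)ᶜ).indicator
            (fun y => ENNReal.ofReal (negMulLog (μ n y))) x) < ENNReal.ofReal ε := by
  have hpt : ∀ x, Tendsto (fun n => ENNReal.ofReal (negMulLog (μ n x))) atTop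
      (𝓝 (ENNReal.ofReal (negMulLog (ν x)))) := fun x =>
    ((ENNReal.continuous_ofReal.comp continuous_negMulLog).tendsto _).comp (hw x)
  simp only [← tsum_subtype]
  refine (ENNReal.tendsto_tsum_iff_forall_exists_tsum_compl_lt hpt
    (fun n => (hfin n).ne) hfin'.ne).trans (ENNReal.forall_ofReal_pos_iff ?_).symm
  exact fun a b hab ⟨K, hK⟩ => ⟨K, fun n => (hK n).trans_le hab⟩

/-- Vitali-type convergence: if probability measures `μₙ` on a countable set converge
pointwise to a probability measure `ν` (all of finite entropy), then
`H(μₙ) → H(ν)` if and only if the sequence is entropy-tight. -/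
theorem entropy_tendsto_iff_entTight {X : Type*} [Countable X]
    (μ : ℕ → X → ℝ) (ν : X → ℝ)
    (hp : ∀ n, IsProb (μ n)) (hν : IsProb ν)
    (hw : ∀ x, Tendsto (fun n => μ n x) atTop (nhds (ν x)))
    (hfin : ∀ n, entE (μ n) < ⊤) (hfin' : entE ν < ⊤) :
    Tendsto (fun n => entE (μ n)) atTop (nhds (entE ν)) ↔
      ∀ ε : ℝ, 0 < ε → ∃ K : Finset X, ∀ n,
        (∑' x, ((↑K : Set X)ᶜ).indicator
            (fun y => ENNReal.ofReal (negMulLog (μ n y))) x) < ENNReal.ofReal ε :=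
  entropy_tendsto_iff_entTight_general μ ν hw hfin hfin'
end

section
/- Let T be a map on probability measures on a countable set S, D ⊆ S, and suppose: (a) for all x ∉ D, (Tμ)(x) ≥ μ(x) for every probability measure μ; (b) if μ(D) > 0 then (Tμ)(D) < μ(D); (c) T is continuous for pointwise convergence. If the sequence of iterates (T^k μ) is tight, then T^k μ converges pointwise to a probability measure ν with ν(D) = 0, and ν is the unique subsequential limit. -/
open Filter

lemma tight_limit {S : Type*} (ρs : ℕ → S → ℝ) (ρ : S → ℝ)
    (hP : ∀ n, IsProb (ρs n))
    (hlim : ∀ x, Tendsto (fun n => ρs n x) atTop (nhds (ρ x)))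
    (htight : ∀ ε > (0:ℝ), ∃ K : Finset S, ∀ n,
      (∑' x, ((↑K : Set S)ᶜ).indicator (ρs n) x) < ε) :
    IsProb ρ ∧ ∀ A : Set S,
      Tendsto (fun n => ∑' x, A.indicator (ρs n) x) atTop (nhds (∑' x, A.indicator ρ x)) := by
  have hnn : ∀ x, 0 ≤ ρ x := fun x => ge_of_tendsto' (hlim x) (fun n => (hP n).1 x)
  have hsum : ∀ n, Summable (ρs n) := fun n => (hP n).2.summable
  have hle1 : ∀ n (F : Finset S), ∑ x ∈ F, ρs n x ≤ 1 := fun n F =>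
    sum_le_hasSum F (fun x _ => (hP n).1 x) (hP n).2
  have hFρ : ∀ F : Finset S, ∑ x ∈ F, ρ x ≤ 1 := fun F =>
    le_of_tendsto' (tendsto_finset_sum F fun x _ => hlim x) (fun n => hle1 n F)
  have hρsum : Summable ρ := summable_of_sum_le hnn hFρ
  have hindlim : ∀ (A : Set S) x,
      Tendsto (fun n => A.indicator (ρs n) x) atTop (nhds (A.indicator ρ x)) := by
    intro A x
    by_cases hx : x ∈ A
    · simpa [Set.indicator_of_mem hx] using hlim x
    · simp [Set.indicator_of_notMem hx]
  have hindnn : ∀ (g : S → ℝ), (∀ x, 0 ≤ g x) → ∀ (A : Set S) x, 0 ≤ A.indicator g x :=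
    fun g hg A x => Set.indicator_nonneg (fun y _ => hg y) x
  have hconv : ∀ A : Set S,
      Tendsto (fun n => ∑' x, A.indicator (ρs n) x) atTop (nhds (∑' x, A.indicator ρ x)) := by
    intro A
    rw [Metric.tendsto_atTop]
    intro ε hε
    obtain ⟨K, hK⟩ := htight (ε/4) (by linarith)
    have hdisj : Disjoint (A ∩ ↑K) (A \ (↑K : Set S)) :=
      Set.disjoint_left.mpr (fun x hx1 hx2 => hx2.2 hx1.2)
    have decomp : ∀ g : S → ℝ, Summable g →
        ∑' x, A.indicator g x
          = (∑ x ∈ K, (A ∩ ↑K).indicator g x) + ∑' x, (A \ ↑K).indicator g x := by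
      intro g hg
      have h1 : A.indicator g = fun x => (A ∩ ↑K).indicator g x + (A \ ↑K).indicator g x := by
        conv_lhs => rw [← Set.inter_union_diff A ↑K]
        exact Set.indicator_union_of_disjoint hdisj g
      rw [h1]
      rw [Summable.tsum_add (hg.indicator _) (hg.indicator _)]
      congr 1
      exact tsum_eq_sum (fun x hx => Set.indicator_of_notMem (fun hm => hx hm.2) g)
    have hsubset : (A \ (↑K : Set S)) ⊆ ((↑K : Set S)ᶜ) := fun x hx => hx.2
    have htail_n : ∀ n, ∑' x, (A \ (↑K : Set S)).indicator (ρs n) x < ε/4 := by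
      intro n
      refine lt_of_le_of_lt (Summable.tsum_le_tsum (fun x =>
        Set.indicator_le_indicator_of_subset hsubset (fun y => (hP n).1 y) x)
        ((hsum n).indicator _) ((hsum n).indicator _)) (hK n)
    have hρctail : ∑' x, ((↑K : Set S)ᶜ).indicator ρ x ≤ ε/4 := by
      refine Summable.tsum_le_of_sum_le (hρsum.indicator _) (fun F => ?_)
      refine le_of_tendsto' (tendsto_finset_sum F fun x _ => hindlim _ x) (fun n => ?_)
      exact le_of_lt (lt_of_le_of_lt (Summable.sum_le_tsum F (fun x _ => hindnn _ (hP n).1 _ x)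
        ((hsum n).indicator _)) (hK n))
    have htailρ : ∑' x, (A \ (↑K : Set S)).indicator ρ x ≤ ε/4 := by
      refine le_trans (Summable.tsum_le_tsum (fun x =>
        Set.indicator_le_indicator_of_subset hsubset (fun y => hnn y) x)
        (hρsum.indicator _) (hρsum.indicator _)) hρctail
    have hfin : Tendsto (fun n => ∑ x ∈ K, (A ∩ ↑K).indicator (ρs n) x) atTop
        (nhds (∑ x ∈ K, (A ∩ (↑K : Set S)).indicator ρ x)) :=
      tendsto_finset_sum K (fun x _ => hindlim _ x)
    rw [Metric.tendsto_atTop] at hfin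
    obtain ⟨N, hN⟩ := hfin (ε/4) (by linarith)
    refine ⟨N, fun n hn => ?_⟩
    have h1 := hN n hn
    rw [Real.dist_eq] at h1 ⊢
    rw [decomp (ρs n) (hsum n), decomp ρ hρsum]
    have h2 := abs_lt.mp h1
    have h3 : 0 ≤ ∑' x, (A \ (↑K : Set S)).indicator (ρs n) x :=
      tsum_nonneg (fun x => hindnn _ (hP n).1 _ x)
    have h4 : 0 ≤ ∑' x, (A \ (↑K : Set S)).indicator ρ x :=
      tsum_nonneg (fun x => hindnn _ hnn _ x)
    have h5 := htail_n n
    rw [abs_lt]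
    constructor <;> [linarith; linarith]
  refine ⟨⟨hnn, ?_⟩, hconv⟩
  have h1 : ∀ n, ∑' x, (Set.univ : Set S).indicator (ρs n) x = 1 := by
    intro n; rw [Set.indicator_univ]; exact (hP n).2.tsum_eq
  have h2 := hconv Set.univ
  simp only [h1] at h2
  have h3 : (∑' x, (Set.univ : Set S).indicator ρ x) = 1 :=
    tendsto_nhds_unique h2 tendsto_const_nhds
  rw [Set.indicator_univ] at h3
  exact h3 ▸ hρsum.hasSum

/-- Let `T` map probability measures on a countable set `S` to probability measures,
with: (a) `(Tμ)(x) ≥ μ(x)` off `D`; (b) if `μ(D) > 0` then `(Tμ)(D) < μ(D)`;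
(c) `T` is continuous for pointwise convergence. If the iterates `T^k μ` form a
tight sequence, then they converge pointwise to a probability measure `ν` with
`ν(D) = 0` (in particular `ν` is the unique subsequential limit). -/
theorem iterates_converge_of_tight {S : Type*} [Countable S] (D : Set S)
    (T : (S → ℝ) → (S → ℝ)) (μ : S → ℝ) (hμ : IsProb μ)
    (hTP : ∀ ρ, IsProb ρ → IsProb (T ρ))
    (ha : ∀ ρ, IsProb ρ → ∀ x ∉ D, ρ x ≤ T ρ x)
    (hb : ∀ ρ, IsProb ρ → 0 < (∑' x, D.indicator ρ x) →
      (∑' x, D.indicator (T ρ) x) < ∑' x, D.indicator ρ x)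
    (hc : ∀ (ρs : ℕ → S → ℝ) (ρ : S → ℝ), (∀ n, IsProb (ρs n)) → IsProb ρ →
      (∀ x, Tendsto (fun n => ρs n x) atTop (nhds (ρ x))) →
      ∀ x, Tendsto (fun n => T (ρs n) x) atTop (nhds (T ρ x)))
    (htight : ∀ ε > (0 : ℝ), ∃ K : Finset S, ∀ k,
      (∑' x, ((↑K : Set S)ᶜ).indicator (T^[k] μ) x) < ε) :
    ∃ ν : S → ℝ, IsProb ν ∧
      (∀ x, Tendsto (fun k => T^[k] μ x) atTop (nhds (ν x))) ∧
      (∑' x, D.indicator ν x) = 0 := by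
  classical
  set f : ℕ → S → ℝ := fun k => T^[k] μ with hfdef
  have hfP : ∀ k, IsProb (f k) := by
    intro k
    induction k with
    | zero => simpa [hfdef] using hμ
    | succ k ih =>
        have : f (k+1) = T (f k) := Function.iterate_succ_apply' T k μ
        rw [this]; exact hTP _ ih
  have hsucc : ∀ k, f (k+1) = T (f k) := fun k => Function.iterate_succ_apply' T k μ
  have hmono : ∀ x ∉ D, Monotone (fun k => f k x) := by
    intro x hx
    refine monotone_nat_of_le_succ (fun k => ?_)
    rw [hsucc]
    exact ha _ (hfP k) x hx
  have hle1 : ∀ k x, f k x ≤ 1 := fun k x =>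
    le_hasSum (hfP k).2 x (fun y _ => (hfP k).1 y)
  set a : ℕ → ℝ := fun k => ∑' x, D.indicator (f k) x with hadef
  have ha0 : ∀ k, 0 ≤ a k := fun k =>
    tsum_nonneg (fun x => Set.indicator_nonneg (fun y _ => (hfP k).1 y) x)
  have hanti : Antitone a := by
    refine antitone_nat_of_succ_le (fun k => ?_)
    have hcompl : ∀ m, a m + (∑' x, Dᶜ.indicator (f m) x) = 1 := by
      intro m
      rw [hadef]
      rw [← Summable.tsum_add ((hfP m).2.summable.indicator _) ((hfP m).2.summable.indicator _)]
      have : (fun x => D.indicator (f m) x + Dᶜ.indicator (f m) x) = f m := by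
        funext x
        exact congrFun (Set.indicator_self_add_compl D (f m)) x
      rw [show (fun x => D.indicator (f m) x + Dᶜ.indicator (f m) x)
            = fun x => f m x from this]
      exact (hfP m).2.tsum_eq
    have hc1 := hcompl k
    have hc2 := hcompl (k+1)
    have hmle : (∑' x, Dᶜ.indicator (f k) x) ≤ ∑' x, Dᶜ.indicator (f (k+1)) x := by
      refine Summable.tsum_le_tsum (fun x => ?_) ((hfP k).2.summable.indicator _)
        ((hfP (k+1)).2.summable.indicator _)
      by_cases hx : x ∈ Dᶜ
      · rw [Set.indicator_of_mem hx, Set.indicator_of_mem hx]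
        exact hmono x hx k.le_succ
      · rw [Set.indicator_of_notMem hx, Set.indicator_of_notMem hx]
    linarith
  have hbdd : BddBelow (Set.range a) := ⟨0, fun _ ⟨k, hk⟩ => hk ▸ ha0 k⟩
  have hconv_a : Tendsto a atTop (nhds (⨅ k, a k)) := tendsto_atTop_ciInf hanti hbdd
  set aInf : ℝ := ⨅ k, a k with haInf
  have haInf0 : 0 ≤ aInf := le_ciInf ha0
  -- the infimum is 0
  have haInf_eq : aInf = 0 := by
    by_contra hne
    have hpos : 0 < aInf := lt_of_le_of_ne haInf0 (Ne.symm hne)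
    -- extract a convergent subsequence
    have hC : IsCompact (Set.pi Set.univ (fun _ : S => Set.Icc (0:ℝ) 1)) :=
      isCompact_univ_pi (fun _ => isCompact_Icc)
    obtain ⟨ρ, -, φ, hφ, hconvρ⟩ := hC.isSeqCompact (x := f)
      (fun k => by intro x _; exact ⟨(hfP k).1 x, hle1 k x⟩)
    have hlimρ : ∀ x, Tendsto (fun j => f (φ j) x) atTop (nhds (ρ x)) :=
      fun x => tendsto_pi_nhds.1 hconvρ x
    have htight1 : ∀ ε > (0:ℝ), ∃ K : Finset S, ∀ j,
        (∑' x, ((↑K : Set S)ᶜ).indicator (f (φ j)) x) < ε := by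
      intro ε hε; obtain ⟨K, hK⟩ := htight ε hε; exact ⟨K, fun j => hK (φ j)⟩
    obtain ⟨hρP, hρconv⟩ := tight_limit (fun j => f (φ j)) ρ (fun j => hfP (φ j)) hlimρ htight1
    -- ρ(D) = aInf
    have hsub1 : Tendsto (fun j => a (φ j)) atTop (nhds aInf) :=
      hconv_a.comp hφ.tendsto_atTop
    have hρD : (∑' x, D.indicator ρ x) = aInf :=
      tendsto_nhds_unique (hρconv D) hsub1
    have hρDpos : 0 < ∑' x, D.indicator ρ x := hρD ▸ hpos
    have hTρlt := hb ρ hρP hρDpos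
    -- T ρ is the limit of f (φ j + 1)
    have hlimTρ : ∀ x, Tendsto (fun j => f (φ j + 1) x) atTop (nhds (T ρ x)) := by
      intro x
      have := hc (fun j => f (φ j)) ρ (fun j => hfP (φ j)) hρP hlimρ x
      simp only [← hsucc] at this
      exact this
    have htight2 : ∀ ε > (0:ℝ), ∃ K : Finset S, ∀ j,
        (∑' x, ((↑K : Set S)ᶜ).indicator (f (φ j + 1)) x) < ε := by
      intro ε hε; obtain ⟨K, hK⟩ := htight ε hε; exact ⟨K, fun j => hK (φ j + 1)⟩
    obtain ⟨-, hTρconv⟩ := tight_limit (fun j => f (φ j + 1)) (T ρ)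
      (fun j => hfP (φ j + 1)) hlimTρ htight2
    have hsub2 : Tendsto (fun j => a (φ j + 1)) atTop (nhds aInf) :=
      hconv_a.comp (tendsto_atTop_mono (fun j => Nat.le_succ (φ j)) hφ.tendsto_atTop)
    have hTρD : (∑' x, D.indicator (T ρ) x) = aInf :=
      tendsto_nhds_unique (hTρconv D) hsub2
    rw [hTρD, hρD] at hTρlt
    exact lt_irrefl _ hTρlt
  rw [haInf_eq] at hconv_a
  -- pointwise limit on D is 0
  have hDlim : ∀ x ∈ D, Tendsto (fun k => f k x) atTop (nhds 0) := by
    intro x hx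
    refine squeeze_zero (fun k => (hfP k).1 x) (fun k => ?_) hconv_a
    have : D.indicator (f k) x = f k x := Set.indicator_of_mem hx _
    calc f k x = D.indicator (f k) x := this.symm
      _ ≤ ∑' y, D.indicator (f k) y :=
          Summable.le_tsum ((hfP k).2.summable.indicator _) x
            (fun y _ => Set.indicator_nonneg (fun z _ => (hfP k).1 z) y)
  -- define the limit
  set ν : S → ℝ := fun x => if x ∈ D then 0 else ⨆ k, f k x with hνdef
  have hνlim : ∀ x, Tendsto (fun k => f k x) atTop (nhds (ν x)) := by
    intro x
    by_cases hx : x ∈ D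
    · rw [hνdef]; simp only [if_pos hx]; exact hDlim x hx
    · rw [hνdef]; simp only [if_neg hx]
      exact tendsto_atTop_ciSup (hmono x hx) ⟨1, fun _ ⟨k, hk⟩ => hk ▸ hle1 k x⟩
  obtain ⟨hνP, -⟩ := tight_limit f ν hfP hνlim htight
  refine ⟨ν, hνP, hνlim, ?_⟩
  have : D.indicator ν = fun _ => (0:ℝ) := by
    funext x
    by_cases hx : x ∈ D
    · rw [Set.indicator_of_mem hx, hνdef]; simp [if_pos hx]
    · rw [Set.indicator_of_notMem hx]
  rw [this]
  exact tsum_zero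
end
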